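/- arXiv:2309.14813 — 2 statements merged into one kernel-verified Lean document; each statement's English description precedes it below -/
import Mathlib

section
/- Let V be a finite-dimensional real vector space, γ a symmetric bilinear form on V, ℓ a linear functional on V, and ℓ⁽²⁾ ∈ ℝ, and let 𝒜 be the associated symmetric bilinear form on V × ℝ. Assume 𝒜 is nondegenerate and the radical Rad γ = {X ∈ V : γ(X,·) = 0} is nonzero. Then the negative index of inertia of 𝒜 equals the negative index of inertia of γ plus 1, and the positive index of inertia of 𝒜 equals the positive index of inertia of γ plus 1. (Equivalently, the signature of 𝒜 is obtained from the signature of γ by removing the zero entry and adjoining one +1 and one −1.) -/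
/-!
Nondegeneracy of `𝒜` forces `ℓ` to be injective on `Rad γ`, so `Rad γ` is a line on which `ℓ`
does not vanish; pick `X ∈ Rad γ` with `ℓ X = 1`. Shearing by `X` turns `𝒜` into `γ ⊕ ⟨-1⟩`
on `N × ℝ` for any `N` on which `γ` is negative definite, so `n₋(𝒜) ≥ n₋(γ) + 1`, and the same
argument for `-𝒜` gives `n₊(𝒜) ≥ n₊(γ) + 1`. Conversely `n₋(𝒜) + n₊(𝒜) ≤ dim V + 1`, while a
`γ`-orthogonal basis shows `dim V ≤ n₋(γ) + n₊(γ) + dim Rad γ = n₋(γ) + n₊(γ) + 1`, so both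
inequalities are equalities.
-/

open Module

/-- The bilinear form `𝒜` on `V × ℝ` associated to metric hypersurface data `(γ, ℓ, ℓ⁽²⁾)`:
`𝒜((W,a),(Z,b)) = γ(W,Z) + a·ℓ(Z) + b·ℓ(W) + a·b·ℓ⁽²⁾`. -/
noncomputable def Amap {V : Type*} [AddCommGroup V] [Module ℝ V]
    (γ : LinearMap.BilinForm ℝ V) (ℓ : Module.Dual ℝ V) (ℓ2 : ℝ) :
    LinearMap.BilinForm ℝ (V × ℝ) :=
  LinearMap.mk₂ ℝ
    (fun p q => γ p.1 q.1 + p.2 * ℓ q.1 + q.2 * ℓ p.1 + p.2 * q.2 * ℓ2)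
    (fun p p' q => by simp [map_add, LinearMap.add_apply]; ring)
    (fun c p q => by simp [map_smul, LinearMap.smul_apply, smul_eq_mul]; ring)
    (fun p q q' => by simp [map_add, LinearMap.add_apply]; ring)
    (fun c p q => by simp [map_smul, LinearMap.smul_apply, smul_eq_mul]; ring)

/-- The negative index of inertia of a bilinear form: the maximal dimension of a subspace
on which the form is negative definite. -/
noncomputable def negIndex {V : Type*} [AddCommGroup V] [Module ℝ V]
    (B : LinearMap.BilinForm ℝ V) : ℕ :=
  sSup {k : ℕ | ∃ W : Submodule ℝ V, Module.finrank ℝ W = k ∧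
    ∀ x ∈ W, x ≠ 0 → B x x < 0}

/-- The positive index of inertia of a bilinear form: the maximal dimension of a subspace
on which the form is positive definite. -/
noncomputable def posIndex {V : Type*} [AddCommGroup V] [Module ℝ V]
    (B : LinearMap.BilinForm ℝ V) : ℕ :=
  sSup {k : ℕ | ∃ W : Submodule ℝ V, Module.finrank ℝ W = k ∧
    ∀ x ∈ W, x ≠ 0 → 0 < B x x}

open LinearMap (BilinForm ker)

section

variable {V : Type*} [AddCommGroup V] [Module ℝ V]

lemma posIndex_eq_negIndex_neg (B : BilinForm ℝ V) : posIndex B = negIndex (-B) := by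
  simp only [posIndex, negIndex, LinearMap.neg_apply, Left.neg_neg_iff]

@[simp]
lemma Amap_apply (γ : BilinForm ℝ V) (ℓ : Dual ℝ V) (ℓ2 : ℝ) (p q : V × ℝ) :
    Amap γ ℓ ℓ2 p q = γ p.1 q.1 + p.2 * ℓ q.1 + q.2 * ℓ p.1 + p.2 * q.2 * ℓ2 :=
  rfl

lemma Amap_neg (γ : BilinForm ℝ V) (ℓ : Dual ℝ V) (ℓ2 : ℝ) :
    Amap (-γ) (-ℓ) (-ℓ2) = -Amap γ ℓ ℓ2 := by
  refine LinearMap.ext₂ fun p q => ?_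
  simp only [Amap_apply, LinearMap.neg_apply]
  ring

lemma eq_zero_of_mem_ker_of_nondegenerate_Amap {γ : BilinForm ℝ V} {ℓ : Dual ℝ V} {ℓ2 : ℝ}
    (hA : (Amap γ ℓ ℓ2).Nondegenerate) {X : V} (hX : X ∈ ker γ) (hℓX : ℓ X = 0) : X = 0 :=
  congrArg Prod.fst <| hA.1 (X, 0) fun q => by simp [LinearMap.mem_ker.1 hX, hℓX]

section FiniteDimensional

variable [FiniteDimensional ℝ V]

lemma bddAbove_finrank_negDefinite (B : BilinForm ℝ V) :
    BddAbove {k : ℕ | ∃ W : Submodule ℝ V, finrank ℝ W = k ∧ ∀ x ∈ W, x ≠ 0 → B x x < 0} :=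
  ⟨finrank ℝ V, fun _ ⟨W, hW, _⟩ => hW ▸ W.finrank_le⟩

lemma exists_finrank_eq_negIndex (B : BilinForm ℝ V) :
    ∃ W : Submodule ℝ V, finrank ℝ W = negIndex B ∧ ∀ x ∈ W, x ≠ 0 → B x x < 0 := by
  refine Nat.sSup_mem ?_ (bddAbove_finrank_negDefinite B)
  exact ⟨0, ⊥, finrank_bot ℝ V, fun _ hx hx0 => (hx0 ((Submodule.mem_bot ℝ).1 hx)).elim⟩

lemma finrank_le_negIndex (B : BilinForm ℝ V) {W : Submodule ℝ V}
    (hW : ∀ x ∈ W, x ≠ 0 → B x x < 0) : finrank ℝ W ≤ negIndex B :=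
  le_csSup (bddAbove_finrank_negDefinite B) ⟨W, rfl, hW⟩

lemma finrank_le_negIndex_of_linearMap {W : Type*} [AddCommGroup W] [Module ℝ W]
    (B : BilinForm ℝ V) (f : W →ₗ[ℝ] V) (hf : ∀ w ≠ 0, B (f w) (f w) < 0) :
    finrank ℝ W ≤ negIndex B := by
  have hinj : Function.Injective f := by
    refine (injective_iff_map_eq_zero f).2 fun w hw => ?_
    by_contra hw0
    simpa [hw] using hf w hw0
  rw [← LinearMap.finrank_range_of_inj hinj]
  refine finrank_le_negIndex B ?_
  rintro _ ⟨w, rfl⟩ hw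
  exact hf w (by rintro rfl; simp at hw)

lemma negIndex_add_negIndex_neg_le_finrank (B : BilinForm ℝ V) :
    negIndex B + negIndex (-B) ≤ finrank ℝ V := by
  obtain ⟨N, hN, hNneg⟩ := exists_finrank_eq_negIndex B
  obtain ⟨P, hP, hPneg⟩ := exists_finrank_eq_negIndex (-B)
  have hNP : N ⊓ P = ⊥ := by
    refine (Submodule.eq_bot_iff _).2 fun x hx => by_contra fun hx0 => ?_
    have := hPneg x hx.2 hx0
    rw [LinearMap.neg_apply, LinearMap.neg_apply, neg_lt_zero] at this
    exact (hNneg x hx.1 hx0).not_gt this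
  have := Submodule.finrank_sup_add_finrank_inf_eq N P
  rw [hNP, finrank_bot, add_zero, hN, hP] at this
  exact this ▸ Submodule.finrank_le _

lemma card_le_negIndex_of_isOrthoᵢ {ι : Type*} [Fintype ι] (B : BilinForm ℝ V) {v : ι → V}
    (hv : LinearMap.IsOrthoᵢ B v) (hneg : ∀ i, B (v i) (v i) < 0) :
    Fintype.card ι ≤ negIndex B := by
  classical
  have hdiag (c : ι → ℝ) :
      B (Fintype.linearCombination ℝ v c) (Fintype.linearCombination ℝ v c) =
        ∑ i, c i * c i * B (v i) (v i) := by
    simp only [Fintype.linearCombination_apply, map_sum, map_smul, LinearMap.sum_apply,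
      LinearMap.smul_apply, smul_eq_mul, Finset.mul_sum]
    refine Finset.sum_congr rfl fun i _ => ?_
    rw [Finset.sum_eq_single i (fun j _ hji => by rw [hv hji]; ring) (by simp)]
    ring
  simpa using finrank_le_negIndex_of_linearMap B (Fintype.linearCombination ℝ v) fun c hc => by
    obtain ⟨i, hi⟩ := Function.ne_iff.1 hc
    rw [hdiag]
    refine Finset.sum_neg' (fun j _ => ?_) ⟨i, Finset.mem_univ i, ?_⟩
    · nlinarith [hneg j, mul_self_nonneg (c j)]
    · nlinarith [hneg i, mul_self_pos.2 hi]

lemma finrank_le_negIndex_add_negIndex_neg_add_finrank_ker (B : BilinForm ℝ V)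
    (hB : B.IsSymm) : finrank ℝ V ≤ negIndex B + negIndex (-B) + finrank ℝ (ker B) := by
  classical
  have : Invertible (2 : ℝ) := invertibleOfNonzero two_ne_zero
  obtain ⟨v, hv⟩ :=
    LinearMap.BilinForm.exists_orthogonal_basis (LinearMap.BilinForm.isSymm_iff.1 hB)
  have hsub (p : Fin (finrank ℝ V) → Prop) : LinearMap.IsOrthoᵢ B fun i : {i // p i} => v i :=
    fun i j hij => hv (Subtype.val_injective.ne hij)
  have hneg : Fintype.card {i // B (v i) (v i) < 0} ≤ negIndex B :=
    card_le_negIndex_of_isOrthoᵢ B (hsub _) fun i => i.2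
  have hpos : Fintype.card {i // 0 < B (v i) (v i)} ≤ negIndex (-B) :=
    card_le_negIndex_of_isOrthoᵢ (-B) (v := fun i : {i // 0 < B (v i) (v i)} => v i)
      (fun _ _ hij => neg_eq_zero.2 (hsub _ hij)) fun i => neg_neg_iff_pos.2 i.2
  have hzero : Fintype.card {i // B (v i) (v i) = 0} ≤ finrank ℝ (ker B) := by
    have hker : Set.range (fun i : {i // B (v i) (v i) = 0} => v i) ⊆ ker B := by
      rintro _ ⟨i, rfl⟩
      refine LinearMap.mem_ker.2 (v.ext fun j => ?_)
      rcases eq_or_ne i.1 j with rfl | hij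
      · simpa using i.2
      · simpa using hv hij
    rw [← finrank_span_eq_card (v.linearIndependent.comp _ Subtype.val_injective)]
    exact Submodule.finrank_mono (Submodule.span_le.2 hker)
  have htri (i) : (B (v i) (v i) < 0 ∨ 0 < B (v i) (v i)) ∨ B (v i) (v i) = 0 := by
    rcases lt_trichotomy (B (v i) (v i)) 0 with h | h | h <;> simp [h]
  calc finrank ℝ V
        = Fintype.card {i // (B (v i) (v i) < 0 ∨ 0 < B (v i) (v i)) ∨ B (v i) (v i) = 0} := by
        rw [Fintype.card_congr (Equiv.subtypeUnivEquiv htri), Fintype.card_fin]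
    _ ≤ _ := Fintype.card_subtype_or _ _
    _ ≤ _ := add_le_add ((Fintype.card_subtype_or _ _).trans (add_le_add hneg hpos)) hzero

lemma negIndex_add_one_le_negIndex_Amap {γ : BilinForm ℝ V} (hγ : γ.IsSymm) (ℓ : Dual ℝ V)
    (ℓ2 : ℝ) {X : V} (hX : X ∈ ker γ) (hℓX : ℓ X = 1) :
    negIndex γ + 1 ≤ negIndex (Amap γ ℓ ℓ2) := by
  obtain ⟨N, hN, hNneg⟩ := exists_finrank_eq_negIndex γ
  have hXl : γ X = 0 := LinearMap.mem_ker.1 hX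
  have hXr (y : V) : γ y X = 0 := by rw [hγ.eq, hXl, LinearMap.zero_apply]
  -- `(z, a) ↦ (z + (t a - ℓ z) X, a)` with `t = (-1 - ℓ⁽²⁾)/2` turns `𝒜` into `γ(z, z) - a²`.
  let t : ℝ := (-1 - ℓ2) / 2
  let f : N × ℝ →ₗ[ℝ] V × ℝ :=
    (N.subtype ∘ₗ LinearMap.fst ℝ N ℝ +
      (t • LinearMap.snd ℝ N ℝ - ℓ ∘ₗ N.subtype ∘ₗ LinearMap.fst ℝ N ℝ).smulRight X).prod
      (LinearMap.snd ℝ N ℝ)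
  have hf (p : N × ℝ) : Amap γ ℓ ℓ2 (f p) (f p) = γ p.1 p.1 - p.2 ^ 2 := by
    change Amap γ ℓ ℓ2 (p.1 + (t * p.2 - ℓ p.1) • X, p.2) (p.1 + (t * p.2 - ℓ p.1) • X, p.2) = _
    simp only [Amap_apply, map_add, map_smul, LinearMap.add_apply, LinearMap.smul_apply, hXl, hXr,
      hℓX, LinearMap.zero_apply, smul_eq_mul]
    ring
  have := finrank_le_negIndex_of_linearMap (Amap γ ℓ ℓ2) f fun ⟨z, a⟩ hp => by
    rw [hf]
    rcases eq_or_ne z 0 with rfl | hz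
    · have ha : a ≠ 0 := by rintro rfl; exact hp rfl
      simpa using sq_pos_of_ne_zero ha
    · nlinarith [hNneg z z.2 (by simpa using hz), sq_nonneg a]
  rwa [finrank_prod, hN, finrank_self] at this

lemma negIndex_Amap {γ : BilinForm ℝ V} (hγ : γ.IsSymm) (ℓ : Dual ℝ V) (ℓ2 : ℝ)
    (hsep : ∀ X ∈ ker γ, ℓ X = 0 → X = 0) (hrad : ker γ ≠ ⊥) :
    negIndex (Amap γ ℓ ℓ2) = negIndex γ + 1 := by
  have hinj : Function.Injective (ℓ ∘ₗ (ker γ).subtype) :=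
    (injective_iff_map_eq_zero _).2 fun X hX => Subtype.ext (hsep X X.2 hX)
  obtain ⟨X, hX, hℓX⟩ : ∃ X ∈ ker γ, ℓ X = 1 := by
    obtain ⟨X₀, hX₀, hX₀ne⟩ := Submodule.ne_bot_iff _ |>.1 hrad
    have hℓX₀ : ℓ X₀ ≠ 0 := fun h => hX₀ne (hsep X₀ hX₀ h)
    exact ⟨(ℓ X₀)⁻¹ • X₀, Submodule.smul_mem _ _ hX₀, by simp [hℓX₀]⟩
  have hlow := negIndex_add_one_le_negIndex_Amap hγ ℓ ℓ2 hX hℓX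
  have hlow_neg : negIndex (-γ) + 1 ≤ negIndex (-Amap γ ℓ ℓ2) := by
    rw [← Amap_neg]
    exact negIndex_add_one_le_negIndex_Amap hγ.neg (-ℓ) (-ℓ2) (X := -X) (by simpa using hX)
      (by simpa)
  have hA_le := negIndex_add_negIndex_neg_le_finrank (Amap γ ℓ ℓ2)
  have hγ_ge := finrank_le_negIndex_add_negIndex_neg_add_finrank_ker γ hγ
  have hker : finrank ℝ (ker γ) ≤ 1 :=
    (LinearMap.finrank_le_finrank_of_injective hinj).trans_eq (finrank_self ℝ)
  rw [finrank_prod, finrank_self] at hA_le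
  omega

end FiniteDimensional

end

/-- If `𝒜` is nondegenerate and `Rad γ ≠ 0`, then the signature of `𝒜` is that of `γ`
with the zero removed and one `+1` and one `−1` adjoined. -/
theorem signature_Amap_of_null_point {V : Type*} [AddCommGroup V] [Module ℝ V]
    [FiniteDimensional ℝ V]
    (γ : LinearMap.BilinForm ℝ V) (hγsym : ∀ X Y : V, γ X Y = γ Y X)
    (ℓ : Module.Dual ℝ V) (ℓ2 : ℝ)
    (hA : (Amap γ ℓ ℓ2).Nondegenerate)
    (hrad : LinearMap.ker γ ≠ ⊥) :
    negIndex (Amap γ ℓ ℓ2) = negIndex γ + 1 ∧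
      posIndex (Amap γ ℓ ℓ2) = posIndex γ + 1 := by
  have hγ : γ.IsSymm := LinearMap.BilinForm.isSymm_def.2 hγsym
  have hsep := fun X => eq_zero_of_mem_ker_of_nondegenerate_Amap hA (X := X)
  refine ⟨negIndex_Amap hγ ℓ ℓ2 hsep hrad, ?_⟩
  rw [posIndex_eq_negIndex_neg, posIndex_eq_negIndex_neg, ← Amap_neg]
  exact negIndex_Amap hγ.neg (-ℓ) (-ℓ2) (by simpa using hsep) (by simpa using hrad)
end

section
/- Let (W, g) be a finite-dimensional real vector space with a nondegenerate symmetric bilinear form g, T ⊂ W a hyperplane, ζ ∈ W \ T, and let (γ, ℓ, ℓ⁽²⁾) be the induced data on T with associated nondegenerate form 𝒜 on T × ℝ. Let (P, n, n⁽²⁾) be the components of the inverse of 𝒜 (P a symmetric bilinear form on T*, n ∈ T, n⁽²⁾ ∈ ℝ). Let 𝛎 ∈ W* be the unique linear functional vanishing on T with 𝛎(ζ) = 1, and let ν ∈ W be the vector with g(ν,·) = 𝛎. Then ν = n⁽²⁾·ζ + n (regarding n ∈ T ⊂ W) and g(ν, ν) = n⁽²⁾. In particular, at null points (n⁽²⁾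 = 0) the normal ν coincides with n. -/
/-!
The map `T × ℝ → W`, `(X, a) ↦ X + a • ζ`, is an isomorphism pulling `g` back to `𝒜`. The
column `(n, n⁽²⁾)` of `𝒜⁻¹` at `(0, 1)` is the `𝒜`-dual of the functional `(X, a) ↦ a`, which
is `𝛎` read in these coordinates; so `n + n⁽²⁾ • ζ` is the `g`-dual `ν` of `𝛎`, and
`g(ν, ν) = 𝛎(ν) = n⁽²⁾`.
-/

open Module

/-- The vector of `T` corresponding to `P(ρ,·) ∈ T**`, via the canonical
identification `T ≅ T**`. -/
noncomputable def Pvec {V : Type*} [AddCommGroup V] [Module ℝ V] [FiniteDimensional ℝ V]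
    (P : LinearMap.BilinForm ℝ (Module.Dual ℝ V)) (ρ : Module.Dual ℝ V) : V :=
  (Module.evalEquiv ℝ V).symm (P ρ)

@[simp]
theorem Pvec_zero {V : Type*} [AddCommGroup V] [Module ℝ V] [FiniteDimensional ℝ V]
    (P : LinearMap.BilinForm ℝ (Dual ℝ V)) : Pvec P 0 = 0 := by
  simp [Pvec]

theorem Submodule.exists_mem_add_smul_eq {K V : Type*} [Field K] [AddCommGroup V] [Module K V]
    [FiniteDimensional K V] {T : Submodule K V} (hT : finrank K T + 1 = finrank K V)
    {v : V} (hv : v ∉ T) (w : V) : ∃ x ∈ T, ∃ c : K, x + c • v = w := by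
  have hquot : finrank K (V ⧸ T) = 1 := by
    have := T.finrank_quotient_add_finrank
    omega
  have hw : w ∈ T ⊔ K ∙ v := ((sup_span_singleton_eq_top_iff hv).2 hquot).symm ▸ mem_top
  obtain ⟨x, hx, y, hy, rfl⟩ := mem_sup.1 hw
  obtain ⟨c, rfl⟩ := mem_span_singleton.1 hy
  exact ⟨x, hx, c, rfl⟩

theorem Amap_induced_apply {W : Type*} [AddCommGroup W] [Module ℝ W]
    {g : LinearMap.BilinForm ℝ W} (hgsym : ∀ x y : W, g x y = g y x) (T : Submodule ℝ W)
    (ζ : W) (X Y : T) (a b : ℝ) :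
    Amap (g.restrict T) ((g ζ).comp T.subtype) (g ζ ζ) (X, a) (Y, b) =
      g (X + a • ζ) (Y + b • ζ) := by
  change g X Y + a * g ζ Y + b * g ζ X + a * b * g ζ ζ = _
  simp only [map_add, map_smul, LinearMap.add_apply, LinearMap.smul_apply, smul_eq_mul,
    hgsym (X : W) ζ]
  ring

theorem normal_decomposition_general {W : Type*} [AddCommGroup W] [Module ℝ W]
    [FiniteDimensional ℝ W]
    (g : LinearMap.BilinForm ℝ W) (hgsym : ∀ x y : W, g x y = g y x)
    (hg : g.Nondegenerate)
    (T : Submodule ℝ W) (hT : Module.finrank ℝ T + 1 = Module.finrank ℝ W)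
    (ζ : W) (hζ : ζ ∉ T)
    (P : LinearMap.BilinForm ℝ (Module.Dual ℝ T))
    (n : T) (n2 : ℝ)
    (hinv : ∀ (α : Module.Dual ℝ T) (a : ℝ) (Z : T) (b : ℝ),
      Amap (g.restrict T) ((g ζ).comp T.subtype) (g ζ ζ)
        (Pvec P α + a • n, α n + a * n2) (Z, b) = α Z + a * b)
    (nuF : Module.Dual ℝ W) (hnuFT : ∀ x ∈ T, nuF x = 0) (hnuFζ : nuF ζ = 1)
    (ν : W) (hν : g ν = nuF) :
    ν = n2 • ζ + (n : W) ∧ g ν ν = n2 := by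
  have hnuF_add_smul : ∀ x ∈ T, ∀ c : ℝ, nuF (x + c • ζ) = c := fun x hx c => by
    simp [hnuFT x hx, hnuFζ]
  have hdual : g (n2 • ζ + n) = nuF := by
    ext w
    obtain ⟨Z, hZ, b, rfl⟩ := Submodule.exists_mem_add_smul_eq hT hζ w
    have hcol := hinv 0 1 ⟨Z, hZ⟩ b
    simp only [Pvec_zero, one_smul, zero_add, LinearMap.zero_apply, one_mul,
      Amap_induced_apply hgsym] at hcol
    rw [hnuF_add_smul Z hZ b, add_comm]
    exact hcol
  have hνeq : ν = n2 • ζ + n :=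
    LinearMap.ker_eq_bot.1 hg.ker_eq_bot (hν.trans hdual.symm)
  refine ⟨hνeq, ?_⟩
  rw [hν, hνeq, add_comm]
  exact hnuF_add_smul n n.2 n2

/-- For the data induced on a hyperplane `T ⊂ (W,g)` by a rigging `ζ`, with `(P, n, n⁽²⁾)`
the components of the inverse of `𝒜`: if `nuF` is the unique functional vanishing on `T` with
`nuF(ζ) = 1` and `ν` the vector with `g(ν,·) = nuF`, then `ν = n⁽²⁾·ζ + n` and
`g(ν,ν) = n⁽²⁾`. -/
theorem normal_decomposition {W : Type*} [AddCommGroup W] [Module ℝ W]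
    [FiniteDimensional ℝ W]
    (g : LinearMap.BilinForm ℝ W) (hgsym : ∀ x y : W, g x y = g y x)
    (hg : g.Nondegenerate)
    (T : Submodule ℝ W) (hT : Module.finrank ℝ T + 1 = Module.finrank ℝ W)
    (ζ : W) (hζ : ζ ∉ T)
    (hA : (Amap (g.restrict T) ((g ζ).comp T.subtype) (g ζ ζ)).Nondegenerate)
    (P : LinearMap.BilinForm ℝ (Module.Dual ℝ T)) (hPsym : ∀ α β, P α β = P β α)
    (n : T) (n2 : ℝ)
    (hinv : ∀ (α : Module.Dual ℝ T) (a : ℝ) (Z : T) (b : ℝ),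
      Amap (g.restrict T) ((g ζ).comp T.subtype) (g ζ ζ)
        (Pvec P α + a • n, α n + a * n2) (Z, b) = α Z + a * b)
    (nuF : Module.Dual ℝ W) (hnuFT : ∀ x ∈ T, nuF x = 0) (hnuFζ : nuF ζ = 1)
    (ν : W) (hν : g ν = nuF) :
    ν = n2 • ζ + (n : W) ∧ g ν ν = n2 :=
  normal_decomposition_general g hgsym hg T hT ζ hζ P n n2 hinv nuF hnuFT hnuFζ ν hν
end
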